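/- Let H be a real Hilbert space, let k₁, …, kₙ be elements of H, let y ∈ ℝⁿ, and let λ > 0. Define the functional E_λ : H → ℝ by E_λ(f) = Σⱼ₌₁ⁿ (yⱼ − ⟨kⱼ, f⟩)² + λ‖f‖². Then the element f̂_λ = Σᵢ₌₁ⁿ cᵢ kᵢ, where c = (K_D + λ Iₙ)⁻¹ y and K_D is the n×n matrix with entries [K_D]ᵢⱼ = ⟨kᵢ, kⱼ⟩, is the unique minimizer of E_λ: for every f ∈ H one has E_λ(f̂_λ) ≤ E_λ(f), with equality only if f = f̂_λ. -/

import Mathlib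

open scoped RealInnerProductSpace Matrix

/-!
With residuals `r j = y j - ⟪k j, f̂⟫`, the linear system `(K_D + λ I) c = y` says exactly
`r = λ c`, i.e. the normal equation `∑ j, r j • k j = λ f̂`. Expanding the squares then gives
`E (f̂ + g) = E f̂ + ∑ j, ⟪k j, g⟫ ^ 2 + λ ‖g‖ ^ 2`, and the excess vanishes only at `g = 0`.
-/

section Ridge

open Finset Matrix

variable {ι H : Type*} [Fintype ι] [NormedAddCommGroup H] [InnerProductSpace ℝ H]

def ridgeLoss (k : ι → H) (y : ι → ℝ) (lam : ℝ) (f : H) : ℝ :=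
  ∑ j, (y j - ⟪k j, f⟫) ^ 2 + lam * ‖f‖ ^ 2

section NormalEquation

variable {k : ι → H} {y : ι → ℝ} {lam : ℝ} {f : H}

theorem ridgeLoss_add_of_normal_eq (hf : ∑ j, (y j - ⟪k j, f⟫) • k j = lam • f) (g : H) :
    ridgeLoss k y lam (f + g) =
      ridgeLoss k y lam f + (∑ j, ⟪k j, g⟫ ^ 2 + lam * ‖g‖ ^ 2) := by
  have hcross : ∑ j, (y j - ⟪k j, f⟫) * ⟪k j, g⟫ = lam * ⟪f, g⟫ := by
    simpa only [sum_inner, real_inner_smul_left] using congrArg (⟪·, g⟫) hf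
  have hsquares : ∑ j, (y j - (⟪k j, f⟫ + ⟪k j, g⟫)) ^ 2 =
      ∑ j, (y j - ⟪k j, f⟫) ^ 2 - 2 * ∑ j, (y j - ⟪k j, f⟫) * ⟪k j, g⟫ + ∑ j, ⟪k j, g⟫ ^ 2 := by
    rw [mul_sum, ← sum_sub_distrib, ← sum_add_distrib]
    exact sum_congr rfl fun j _ => by ring
  simp only [ridgeLoss, inner_add_right]
  rw [hsquares, hcross, norm_add_sq_real]
  ring

theorem ridgeLoss_unique_min_of_normal_eq (hlam : 0 < lam)
    (hf : ∑ j, (y j - ⟪k j, f⟫) • k j = lam • f) (g : H) :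
    ridgeLoss k y lam f ≤ ridgeLoss k y lam g ∧
      (ridgeLoss k y lam g = ridgeLoss k y lam f → g = f) := by
  have hexpand := ridgeLoss_add_of_normal_eq hf (g - f)
  rw [add_sub_cancel] at hexpand
  have hfit : 0 ≤ ∑ j, ⟪k j, g - f⟫ ^ 2 := sum_nonneg fun j _ => sq_nonneg _
  have hpen : 0 ≤ lam * ‖g - f‖ ^ 2 := by positivity
  refine ⟨by linarith, fun heq => ?_⟩
  have hnorm : ‖g - f‖ ^ 2 = 0 := by
    simpa [hlam.ne'] using (show lam * ‖g - f‖ ^ 2 = 0 by linarith)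
  simpa [sub_eq_zero] using hnorm

end NormalEquation

theorem inner_sum_smul_eq_gram_mulVec (k : ι → H) (c : ι → ℝ) (j : ι) :
    ⟪k j, ∑ i, c i • k i⟫ = (gram ℝ k *ᵥ c) j := by
  simp only [inner_sum, real_inner_smul_right, mulVec, dotProduct, gram_apply, mul_comm]

theorem normal_eq_of_gram_add_smul_one_mulVec_eq [DecidableEq ι] {k : ι → H} {y c : ι → ℝ}
    {lam : ℝ} (hc : (gram ℝ k + lam • (1 : Matrix ι ι ℝ)) *ᵥ c = y) :
    ∑ j, (y j - ⟪k j, ∑ i, c i • k i⟫) • k j = lam • ∑ i, c i • k i := by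
  have hresidual : ∀ j, y j - ⟪k j, ∑ i, c i • k i⟫ = lam * c j := fun j => by
    rw [← hc, inner_sum_smul_eq_gram_mulVec, add_mulVec, smul_mulVec, one_mulVec]
    simp
  simp only [hresidual, smul_sum, mul_smul]

theorem posDef_gram_add_smul_one [DecidableEq ι] (k : ι → H) {lam : ℝ} (hlam : 0 < lam) :
    (gram ℝ k + lam • (1 : Matrix ι ι ℝ)).PosDef :=
  PosDef.posSemidef_add (posSemidef_gram ℝ k) (PosDef.one.smul hlam)

end Ridge

theorem ridge_regression_unique_minimizer_general
    {H : Type*} [NormedAddCommGroup H] [InnerProductSpace ℝ H]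
    (n : ℕ) (k : Fin n → H) (y : Fin n → ℝ) (lam : ℝ) (hlam : 0 < lam)
    (KD : Matrix (Fin n) (Fin n) ℝ) (hKD : ∀ i j, KD i j = ⟪k i, k j⟫)
    (c : Fin n → ℝ)
    (hc : c = (KD + lam • (1 : Matrix (Fin n) (Fin n) ℝ))⁻¹ *ᵥ y)
    (E : H → ℝ)
    (hE : ∀ f : H, E f = (∑ j, (y j - ⟪k j, f⟫) ^ 2) + lam * ‖f‖ ^ 2)
    (fhat : H) (hfhat : fhat = ∑ i, c i • k i) :
    ∀ f : H, E fhat ≤ E f ∧ (E f = E fhat → f = fhat) := by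
  obtain rfl : KD = Matrix.gram ℝ k := Matrix.ext hKD
  obtain rfl : E = ridgeLoss k y lam := funext hE
  have hdet : IsUnit (Matrix.gram ℝ k + lam • (1 : Matrix (Fin n) (Fin n) ℝ)).det :=
    (Matrix.isUnit_iff_isUnit_det _).mp (posDef_gram_add_smul_one k hlam).isUnit
  have hsolve : (Matrix.gram ℝ k + lam • (1 : Matrix (Fin n) (Fin n) ℝ)) *ᵥ c = y := by
    rw [hc, Matrix.mulVec_mulVec, Matrix.mul_nonsing_inv _ hdet, Matrix.one_mulVec]
  subst hfhat
  exact ridgeLoss_unique_min_of_normal_eq hlam (normal_eq_of_gram_add_smul_one_mulVec_eq hsolve)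

/-- The ridge-regression representer theorem: the function
`f̂_λ = ∑ i, c i • k i` with `c = (K_D + λ Iₙ)⁻¹ y` is the unique minimizer of
`E_λ(f) = ∑ j (y j - ⟪k j, f⟫)² + λ ‖f‖²` over a real Hilbert space `H`. -/
theorem ridge_regression_unique_minimizer
    {H : Type*} [NormedAddCommGroup H] [InnerProductSpace ℝ H] [CompleteSpace H]
    (n : ℕ) (k : Fin n → H) (y : Fin n → ℝ) (lam : ℝ) (hlam : 0 < lam)
    (KD : Matrix (Fin n) (Fin n) ℝ) (hKD : ∀ i j, KD i j = ⟪k i, k j⟫)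
    (c : Fin n → ℝ)
    (hc : c = (KD + lam • (1 : Matrix (Fin n) (Fin n) ℝ))⁻¹ *ᵥ y)
    (E : H → ℝ)
    (hE : ∀ f : H, E f = (∑ j, (y j - ⟪k j, f⟫) ^ 2) + lam * ‖f‖ ^ 2)
    (fhat : H) (hfhat : fhat = ∑ i, c i • k i) :
    ∀ f : H, E fhat ≤ E f ∧ (E f = E fhat → f = fhat) :=
  ridge_regression_unique_minimizer_general n k y lam hlam KD hKD c hc E hE fhat hfhat
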